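/- Let M = (E,ρ) be a finite matroid of rank d ≥ 0 with Y_M(q,t) := (1−q)^{ρ(E)} q^{σ(E)} T_M((qt+1−q)/(1−q), 1/q) and Ŷ_M(p,t) := ((−1)^d Y_M(1+p, −t) − t^d)/(1+t). Then Ŷ_M(p,t) = Σ_{i=0}^{d−1} W_i^M(p) · p^{d−1−i} · t^i, where W_i^M(p) := Σ_{S ∈ 𝒮ᵢ^M} μᵢ^M(S)(−p)^{#S−d+1+i}. -/

import Mathlib

open Finset

/-- A matroid on a finite ground set, presented by its (Whitney) rank function:
normalized, monotone, and submodular. -/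
structure FinMatroid (α : Type*) [DecidableEq α] [Fintype α] where
  rk : Finset α → ℕ
  rk_le_card : ∀ S, rk S ≤ S.card
  rk_mono : ∀ ⦃S T : Finset α⦄, S ⊆ T → rk S ≤ rk T
  rk_submod : ∀ S T : Finset α, rk (S ∪ T) + rk (S ∩ T) ≤ rk S + rk T

namespace FinMatroid

variable {α : Type*} [DecidableEq α] [Fintype α]

/-- The rank `ρ(E)` of the matroid. -/
def rank (M : FinMatroid α) : ℕ := M.rk Finset.univ

lemma rk_empty (M : FinMatroid α) : M.rk ∅ = 0 :=
  Nat.le_zero.mp (by simpa using M.rk_le_card ∅)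

lemma rk_le_rank (M : FinMatroid α) (S : Finset α) : M.rk S ≤ M.rank :=
  M.rk_mono (Finset.subset_univ S)

/-- A loop is an element of rank zero. -/
def IsLoop (M : FinMatroid α) (e : α) : Prop := M.rk {e} = 0

/-- A coloop: deleting it lowers the rank. -/
def IsColoop (M : FinMatroid α) (e : α) : Prop :=
  M.rk (Finset.univ.erase e) + 1 = M.rank

/-- A link is an element which is neither a loop nor a coloop. -/
def IsLink (M : FinMatroid α) (e : α) : Prop := ¬ M.IsLoop e ∧ ¬ M.IsColoop e

/-- The embedding of the ground set with `e` removed. -/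
def emb (e : α) : {x : α // x ≠ e} ↪ α := Function.Embedding.subtype _

lemma e_not_mem_map (e : α) (S : Finset {x : α // x ≠ e}) : e ∉ S.map (emb e) := by
  simp [emb]

/-- Deletion `M ∖ e` of an element. -/
def delete (M : FinMatroid α) (e : α) : FinMatroid {x : α // x ≠ e} where
  rk S := M.rk (S.map (emb e))
  rk_le_card S := by simpa using M.rk_le_card (S.map (emb e))
  rk_mono S T h := M.rk_mono (Finset.map_subset_map.mpr h)
  rk_submod S T := by
    have := M.rk_submod (S.map (emb e)) (T.map (emb e))
    rwa [← Finset.map_union, ← Finset.map_inter] at this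

/-- Contraction `M / e` of an element. -/
def contract (M : FinMatroid α) (e : α) : FinMatroid {x : α // x ≠ e} where
  rk S := M.rk (insert e (S.map (emb e))) - M.rk {e}
  rk_le_card S := by
    try dsimp only
    have h1 : M.rk (insert e (S.map (emb e))) ≤ M.rk (S.map (emb e)) + M.rk {e} := by
      have := M.rk_submod (S.map (emb e)) {e}
      have hie : S.map (emb e) ∩ {e} = ∅ := by
        simp [Finset.eq_empty_iff_forall_notMem, emb]
      rw [Finset.union_comm] at this
      rw [hie, M.rk_empty] at this
      rw [Finset.insert_eq]
      omega
    have h2 := M.rk_le_card (S.map (emb e))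
    simp only [Finset.card_map] at h2
    omega
  rk_mono S T h := by
    try dsimp only
    have := M.rk_mono (Finset.insert_subset_insert e ((Finset.map_subset_map (f := emb e)).mpr h))
    omega
  rk_submod S T := by
    try dsimp only
    have key := M.rk_submod (insert e (S.map (emb e))) (insert e (T.map (emb e)))
    have hU : insert e (S.map (emb e)) ∪ insert e (T.map (emb e))
        = insert e ((S ∪ T).map (emb e)) := by
      rw [Finset.map_union]; ext x
      simp only [Finset.mem_union, Finset.mem_insert]; tauto
    have hI : insert e (S.map (emb e)) ∩ insert e (T.map (emb e))
        = insert e ((S ∩ T).map (emb e)) := by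
      rw [Finset.map_inter]; ext x
      simp only [Finset.mem_inter, Finset.mem_insert]; tauto
    rw [hU, hI] at key
    have l1 : M.rk {e} ≤ M.rk (insert e ((S ∪ T).map (emb e))) :=
      M.rk_mono (by simp)
    have l2 : M.rk {e} ≤ M.rk (insert e ((S ∩ T).map (emb e))) :=
      M.rk_mono (by simp)
    have l3 : M.rk {e} ≤ M.rk (insert e (S.map (emb e))) := M.rk_mono (by simp)
    have l4 : M.rk {e} ≤ M.rk (insert e (T.map (emb e))) := M.rk_mono (by simp)
    omega

/-- The Tutte polynomial
`T_M(x,y) = Σ_{S ⊆ E} (x-1)^{ρ(E)-ρ(S)} (y-1)^{#S-ρ(S)}`, evaluated in a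
commutative ring. -/
def tutte (M : FinMatroid α) {R : Type*} [CommRing R] (x y : R) : R :=
  ∑ S : Finset α, (x - 1) ^ (M.rank - M.rk S) * (y - 1) ^ (S.card - M.rk S)

/-- The specialization `Y_M(q,t) = (1-q)^{ρ(E)} q^{σ(E)} T_M((qt+1-q)/(1-q), 1/q)`. -/
noncomputable def Y (M : FinMatroid α) {K : Type*} [Field K] (q t : K) : K :=
  (1 - q) ^ M.rank * q ^ (Fintype.card α - M.rank) *
    M.tutte ((q * t + 1 - q) / (1 - q)) (1 / q)

open Classical in
/-- The Möbius function `μ(0̂, S)` of the poset obtained from the finsets satisfying `P`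
(ordered by inclusion) by adjoining a bottom element `0̂`; by convention `μ(0̂,S) = 0`
for sets not satisfying `P`. -/
noncomputable def mob (P : Finset α → Prop) : Finset α → ℤ := fun S =>
  if P S then -1 - ∑ T ∈ (S.powerset.erase S).attach, mob P T.1 else 0
termination_by S => S.card
decreasing_by
  have hT := T.2
  simp only [Finset.mem_erase, Finset.mem_powerset] at hT
  exact Finset.card_lt_card (HasSubset.Subset.ssubset_of_ne hT.2 hT.1)

/-- Membership in `𝒮ᵢ^M = {S ⊆ E : ρ(S) ≥ d - i}` (with `i : ℤ`). -/
def Smem (M : FinMatroid α) (i : ℤ) (S : Finset α) : Prop :=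
  (M.rank : ℤ) - i ≤ (M.rk S : ℤ)

/-- The Möbius function `μᵢ^M(S) = μ(0̂, S)` of the lattice `ℒᵢ^M = {0̂} ⊕ 𝒮ᵢ^M`. -/
noncomputable def mu (M : FinMatroid α) (i : ℤ) : Finset α → ℤ := mob (M.Smem i)

/-- `W_i^M(p) = Σ_{S ∈ 𝒮ᵢ^M} μᵢ^M(S) (-p)^{#S-d+1+i}`, evaluated in a commutative
ring.  (Terms with `S ∉ 𝒮ᵢ^M` vanish since `μᵢ^M` is zero there.) -/
noncomputable def W (M : FinMatroid α) (i : ℤ) {R : Type*} [CommRing R] (p : R) : R :=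
  ∑ S : Finset α, (M.mu i S : R) * (-p) ^ (((S.card : ℤ) - M.rank + 1 + i).toNat)

end FinMatroid


section Aux
open FinMatroid

variable {α : Type*} [DecidableEq α] [Fintype α]

lemma mob_of_not {P : Finset α → Prop} {S : Finset α} (h : ¬ P S) : mob P S = 0 := by
  rw [mob]; simp [h]

open Classical in
lemma sum_mob_powerset {P : Finset α → Prop}
    (hP : ∀ ⦃T S : Finset α⦄, T ⊆ S → P T → P S) (S : Finset α) :
    ∑ T ∈ S.powerset, mob P T = if P S then -1 else 0 := by
  by_cases h : P S
  · rw [if_pos h]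
    have hmem : S ∈ S.powerset := Finset.mem_powerset_self S
    rw [← Finset.add_sum_erase _ _ hmem]
    have : mob P S = -1 - ∑ T ∈ (S.powerset.erase S), mob P T := by
      rw [mob, if_pos h, Finset.sum_attach]
    rw [this]; ring
  · rw [if_neg h]
    apply Finset.sum_eq_zero
    intro T hT
    exact mob_of_not (fun hPT => h (hP (Finset.mem_powerset.mp hT) hPT))

/-- Binomial over a powerset. -/
lemma sum_powerset_pow {K : Type*} [CommRing K] (x y : K) (W : Finset α) :
    ∑ V ∈ W.powerset, x ^ V.card * y ^ (W.card - V.card) = (x + y) ^ W.card := by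
  induction W using Finset.induction_on with
  | empty => simp
  | @insert a W ha ih =>
    rw [Finset.powerset_insert, Finset.sum_union]
    · rw [Finset.sum_image (fun u hu v hv huv => by
        have hau : a ∉ u := fun h => ha (Finset.mem_powerset.mp hu h)
        have hav : a ∉ v := fun h => ha (Finset.mem_powerset.mp hv h)
        have := congrArg (fun s => Finset.erase s a) huv
        simpa [Finset.erase_insert hau, Finset.erase_insert hav] using this)]
      have hcard : (insert a W).card = W.card + 1 := Finset.card_insert_of_notMem ha
      have h1 : ∑ V ∈ W.powerset, x ^ V.card * y ^ ((insert a W).card - V.card)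
          = y * ∑ V ∈ W.powerset, x ^ V.card * y ^ (W.card - V.card) := by
        rw [Finset.mul_sum]
        refine Finset.sum_congr rfl fun V hV => ?_
        have hVW : V.card ≤ W.card := Finset.card_le_card (Finset.mem_powerset.mp hV)
        rw [hcard, show W.card + 1 - V.card = (W.card - V.card) + 1 by omega, pow_succ]
        ring
      have h2 : ∑ V ∈ W.powerset, x ^ (insert a V).card * y ^ ((insert a W).card - (insert a V).card)
          = x * ∑ V ∈ W.powerset, x ^ V.card * y ^ (W.card - V.card) := by
        rw [Finset.mul_sum]
        refine Finset.sum_congr rfl fun V hV => ?_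
        have haV : a ∉ V := fun h => ha (Finset.mem_powerset.mp hV h)
        rw [hcard, Finset.card_insert_of_notMem haV,
          show W.card + 1 - (V.card + 1) = W.card - V.card by omega, pow_succ]
        ring
      rw [h1, h2, ih, hcard, pow_succ]; ring
    · rw [Finset.disjoint_right]
      intro V hV hV'
      obtain ⟨U, hU, rfl⟩ := Finset.mem_image.mp hV
      exact ha (Finset.mem_powerset.mp hV' (Finset.mem_insert_self a U))

open Classical in
lemma sum_superset_pow {K : Type*} [CommRing K] (x y : K) (U : Finset α) :
    ∑ T : Finset α, (if U ⊆ T then x ^ T.card * y ^ (Fintype.card α - T.card) else 0)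
      = x ^ U.card * (x + y) ^ (Fintype.card α - U.card) := by
  rw [← Finset.sum_filter]
  have hb : ∑ T ∈ Finset.univ.filter (fun T => U ⊆ T), x ^ T.card * y ^ (Fintype.card α - T.card)
      = ∑ V ∈ (Finset.univ \ U).powerset, x ^ (U ∪ V).card * y ^ (Fintype.card α - (U ∪ V).card) := by
    refine Finset.sum_nbij' (fun T => T \ U) (fun V => U ∪ V) ?_ ?_ ?_ ?_ ?_
    · intro T hT
      simp only [Finset.mem_filter] at hT
      exact Finset.mem_powerset.mpr (Finset.sdiff_subset_sdiff (Finset.subset_univ T) le_rfl)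
    · intro V hV
      simp [Finset.mem_filter]
    · intro T hT
      simp only [Finset.mem_filter, Finset.mem_univ, true_and] at hT
      exact Finset.union_sdiff_of_subset hT
    · intro V hV
      have : Disjoint U V := by
        have := Finset.mem_powerset.mp hV
        exact Finset.disjoint_left.mpr fun a haU haV => (Finset.mem_sdiff.mp (this haV)).2 haU
      rw [Finset.union_sdiff_cancel_left this]
    · intro T hT
      simp only [Finset.mem_filter, Finset.mem_univ, true_and] at hT
      rw [Finset.union_sdiff_of_subset hT]
  rw [hb]
  have hcard : (Finset.univ \ U).card = Fintype.card α - U.card := by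
    rw [Finset.card_sdiff_of_subset (Finset.subset_univ U), Finset.card_univ]
  have : ∀ V ∈ (Finset.univ \ U).powerset,
      x ^ (U ∪ V).card * y ^ (Fintype.card α - (U ∪ V).card)
      = x ^ U.card * (x ^ V.card * y ^ ((Finset.univ \ U).card - V.card)) := by
    intro V hV
    have hdisj : Disjoint U V := by
      have := Finset.mem_powerset.mp hV
      exact Finset.disjoint_left.mpr fun a haU haV => (Finset.mem_sdiff.mp (this haV)).2 haU
    have hVc : V.card ≤ Fintype.card α - U.card := hcard ▸ Finset.card_le_card (Finset.mem_powerset.mp hV)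
    have hUc : U.card ≤ Fintype.card α := Finset.card_le_univ U
    rw [Finset.card_union_of_disjoint hdisj, hcard,
      show Fintype.card α - (U.card + V.card) = Fintype.card α - U.card - V.card by omega,
      pow_add]
    ring
  rw [Finset.sum_congr rfl this, ← Finset.mul_sum, sum_powerset_pow, hcard]

lemma neg_one_pow_sub' {K : Type*} [Field K] {i d : ℕ} (h : i ≤ d) :
    (-1:K)^(d-i) = (-1)^d * (-1)^i := by
  have h1 : (-1:K)^(d-i) * (-1)^i = (-1)^d := by rw [← pow_add]; congr 1; omega
  have h2 : (-1:K)^i * (-1)^i = 1 := by rw [← mul_pow]; norm_num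
  calc (-1:K)^(d-i) = (-1)^(d-i) * ((-1)^i * (-1)^i) := by rw [h2, mul_one]
  _ = ((-1)^(d-i) * (-1)^i) * (-1)^i := by ring
  _ = (-1)^d * (-1)^i := by rw [h1]

lemma geom_piece {K : Type*} [Field K] (t : K) {d j : ℕ} (hj : j ≤ d) :
    (∑ i ∈ Finset.Ico j d, (-1:K)^(d-i) * t^i) * (1+t) = (-1)^(d-j) * t^j - t^d := by
  have hterm : ∀ i ∈ Finset.Ico j d, (-1:K)^(d-i) * t^i = (-1)^d * (-t)^i := by
    intro i hi
    have hid : i ≤ d := le_of_lt (Finset.mem_Ico.mp hi).2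
    rw [neg_one_pow_sub' hid, neg_pow]; ring
  rw [Finset.sum_congr rfl hterm, ← Finset.mul_sum, Finset.sum_Ico_eq_sub _ hj,
    neg_one_pow_sub' hj]
  have gd := geom_sum_mul (-t) d
  have gj := geom_sum_mul (-t) j
  have h2d : (-1:K)^d * (-t)^d = t^d := by rw [← mul_pow]; norm_num
  have h2j : ((-t):K)^j = (-1)^j * t^j := by rw [neg_pow]
  have h3 : (-1:K)^(d*2) = 1 := by rw [mul_comm, pow_mul]; norm_num
  linear_combination (-1:K)^d * (gj - gd) + h2d + ((-1:K)^d) * h2j - 2*t^d*h3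

lemma term_calc' {K : Type*} [Field K] (p t : K) (hp0 : p ≠ 0) (hp1 : 1+p ≠ 0)
    (a m1 m2 m3 m4 : ℕ) (h : m1 + m2 = m3 + m4) :
    (-1:K)^(a+m2) * ((-p)^(a+m2) * (1+p)^m1 * ((1+p)*t/p)^m2 * (-p/(1+p))^m3)
      = (-1)^a * (-p)^(a+m3) * (1+p)^m4 * t^m2 := by
  have e1 : (-1:K)^(m2*2) = 1 := by rw [mul_comm, pow_mul]; norm_num
  have e2 : (1+p:K)^m1 * (1+p)^m2 = (1+p)^m3 * (1+p)^m4 := by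
    rw [← pow_add, ← pow_add, h]
  rw [div_pow, div_pow, mul_pow]
  field_simp
  linear_combination (p^a*p^m2*p^m3*t^m2*(-1:K)^(a*2)*(-1:K)^m3*(1+p)^m1*(1+p)^m2) * e1
    + (p^a*p^m2*p^m3*t^m2*(-1:K)^(a*2)*(-1:K)^m3) * e2

lemma term_calc {K : Type*} [Field K] (p t : K) (hp0 : p ≠ 0) (hp1 : 1+p ≠ 0)
    {a c d n : ℕ} (had : a ≤ d) (hac : a ≤ c) (hcn : c ≤ n) (hdn : d ≤ n) :
    (-1:K)^d * ((-p)^d * (1+p)^(n-d) * ((1+p)*t/p)^(d-a) * (-p/(1+p))^(c-a))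
      = (-1)^a * (-p)^c * (1+p)^(n-c) * t^(d-a) := by
  obtain ⟨m2, rfl⟩ : ∃ m2, d = a + m2 := ⟨d - a, by omega⟩
  obtain ⟨m3, rfl⟩ : ∃ m3, c = a + m3 := ⟨c - a, by omega⟩
  rw [Nat.add_sub_cancel_left, Nat.add_sub_cancel_left]
  exact term_calc' p t hp0 hp1 a (n - (a+m2)) m2 m3 (n - (a+m3)) (by omega)

/-- Evaluation of `(-1)^d Y_M(1+p, -t)`. -/
lemma Y_eval (M : FinMatroid α) {K : Type*} [Field K] (p t : K)
    (hp0 : p ≠ 0) (hp1 : 1 + p ≠ 0) :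
    (-1:K)^M.rank * M.Y (1+p) (-t)
      = ∑ S : Finset α, (-1)^(M.rk S) * (-p)^S.card
          * (1+p)^(Fintype.card α - S.card) * t^(M.rank - M.rk S) := by
  have hmp : (-p : K) ≠ 0 := neg_ne_zero.mpr hp0
  have hx : ((1+p)*(-t) + 1 - (1+p)) / (-p) - 1 = (1+p)*t/p := by
    field_simp
    ring
  have hy : (1:K)/(1+p) - 1 = -p/(1+p) := by
    field_simp
    ring
  rw [FinMatroid.Y, FinMatroid.tutte]
  rw [show (1:K) - (1+p) = -p by ring, hx, hy]
  rw [Finset.mul_sum, Finset.mul_sum]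
  refine Finset.sum_congr rfl fun S _ => ?_
  have had : M.rk S ≤ M.rank := M.rk_le_rank S
  have hac : M.rk S ≤ S.card := M.rk_le_card S
  have hcn : S.card ≤ Fintype.card α := Finset.card_le_univ S
  have hdn : M.rank ≤ Fintype.card α := by
    have := M.rk_le_card Finset.univ
    simpa [FinMatroid.rank, Finset.card_univ] using this
  have key := term_calc p t hp0 hp1 had hac hcn hdn
  linear_combination key

open Classical in
/-- Master evaluation of `W_i(p) p^(d-1-i)`. -/
lemma W_eval (M : FinMatroid α) {K : Type*} [Field K] (p : K) (hp0 : p ≠ 0)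
    {i : ℕ} (hi : i < M.rank) :
    M.W (i:ℤ) p * p ^ (M.rank - 1 - i)
      = ∑ T : Finset α, (if M.Smem (i:ℤ) T then
          (-1:K)^(M.rank - i) * ((-p)^T.card * (1+p)^(Fintype.card α - T.card)) else 0) := by
  set d := M.rank with hd
  set n := Fintype.card α with hn
  have hmono : ∀ ⦃T S : Finset α⦄, T ⊆ S → M.Smem (i:ℤ) T → M.Smem (i:ℤ) S := by
    intro T S hTS h
    have := M.rk_mono hTS
    unfold FinMatroid.Smem at h ⊢
    omega
  -- Step 1: multiply p-power into the sum and simplify per term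
  have step1 : M.W (i:ℤ) p * p ^ (d - 1 - i)
      = (-1:K)^(d-1-i) * ∑ S : Finset α, (M.mu (i:ℤ) S : K) * (-p)^S.card := by
    rw [FinMatroid.W, Finset.sum_mul, Finset.mul_sum]
    refine Finset.sum_congr rfl fun S _ => ?_
    by_cases hmu : M.mu (i:ℤ) S = 0
    · rw [hmu]; push_cast; ring
    · have hSm : M.Smem (i:ℤ) S := by
        by_contra hc
        exact hmu (mob_of_not hc)
      have hrk : (d:ℤ) - i ≤ M.rk S := hSm
      have hcard : (d:ℤ) ≤ S.card + 1 + i := by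
        have := M.rk_le_card S
        omega
      have htn : (((S.card:ℤ) - M.rank + 1 + (i:ℤ)).toNat) = S.card + 1 + i - d := by
        omega
      rw [htn]
      obtain ⟨k, hk⟩ : ∃ k, S.card + 1 + i - d = k := ⟨_, rfl⟩
      have hks : S.card = k + (d - 1 - i) := by omega
      have hsign : (-1:K)^(d-1-i) * (-p)^(d-1-i) = p^(d-1-i) := by
        rw [← mul_pow]; norm_num
      rw [hk, hks, pow_add]
      linear_combination (-(M.mu (i:ℤ) S : K) * (-p)^k) * hsign
  rw [step1]
  -- Step 2: replace (-p)^#S by a superset sum, then swap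
  have hrepl : ∀ S : Finset α, ((-p:K))^S.card
      = ∑ T : Finset α, (if S ⊆ T then (-p)^T.card * (1+p)^(n - T.card) else 0) := by
    intro S
    rw [sum_superset_pow]
    rw [show (-p) + (1+p) = (1:K) by ring, one_pow, mul_one]
  have step2 : ∑ S : Finset α, (M.mu (i:ℤ) S : K) * (-p)^S.card
      = ∑ T : Finset α, (if M.Smem (i:ℤ) T then (-1:K) else 0)
          * ((-p)^T.card * (1+p)^(n - T.card)) := by
    calc ∑ S : Finset α, (M.mu (i:ℤ) S : K) * (-p)^S.card
        = ∑ S : Finset α, ∑ T : Finset α,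
            (if S ⊆ T then (M.mu (i:ℤ) S : K) * ((-p)^T.card * (1+p)^(n - T.card)) else 0) := by
          refine Finset.sum_congr rfl fun S _ => ?_
          rw [hrepl S, Finset.mul_sum]
          refine Finset.sum_congr rfl fun T _ => ?_
          rw [mul_ite, mul_zero]
      _ = ∑ T : Finset α, ∑ S : Finset α,
            (if S ⊆ T then (M.mu (i:ℤ) S : K) * ((-p)^T.card * (1+p)^(n - T.card)) else 0) :=
          Finset.sum_comm
      _ = ∑ T : Finset α, (if M.Smem (i:ℤ) T then (-1:K) else 0)
            * ((-p)^T.card * (1+p)^(n - T.card)) := by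
          refine Finset.sum_congr rfl fun T _ => ?_
          rw [← Finset.sum_filter]
          have hfil : Finset.univ.filter (fun S : Finset α => S ⊆ T) = T.powerset := by
            ext S; simp [Finset.mem_powerset]
          rw [hfil, ← Finset.sum_mul]
          congr 1
          have := sum_mob_powerset hmono T
          have hcast : ((∑ S ∈ T.powerset, mob (M.Smem (i:ℤ)) S : ℤ) : K)
              = ∑ S ∈ T.powerset, ((M.mu (i:ℤ) S : ℤ) : K) := by
            push_cast [FinMatroid.mu]; rfl
          rw [← hcast, this]
          split <;> simp
  rw [step2, Finset.mul_sum]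
  refine Finset.sum_congr rfl fun T _ => ?_
  split
  · have : (-1:K)^(d-1-i) * (-1) = (-1)^(d-i) := by
      rw [show d - i = (d-1-i) + 1 by omega, pow_succ]
    linear_combination ((-p)^T.card * (1+p)^(n - T.card)) * this
  · ring

end Aux

/-- `Ŷ_M(p,t) = Σ_{i=0}^{d-1} W_i^M(p) p^{d-1-i} t^i`, where
`Ŷ_M(p,t) = ((-1)^d Y_M(1+p,-t) - t^d)/(1+t)`. -/
theorem Yhat_eq_sum_W {α : Type*} [DecidableEq α] [Fintype α] (M : FinMatroid α)
    {K : Type*} [Field K] (p t : K) (hp0 : p ≠ 0) (hp1 : 1 + p ≠ 0) (ht : 1 + t ≠ 0) :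
    ((-1 : K) ^ M.rank * M.Y (1 + p) (-t) - t ^ M.rank) / (1 + t) =
      ∑ i ∈ Finset.range M.rank, M.W (i : ℤ) p * p ^ (M.rank - 1 - i) * t ^ i := by
  classical
  set d := M.rank with hd
  set n := Fintype.card α with hn
  rw [div_eq_iff ht, Y_eval M p t hp0 hp1]
  have hstep : ∀ i ∈ Finset.range d, M.W (i:ℤ) p * p ^ (d - 1 - i) * t ^ i
      = ∑ T : Finset α, (if M.Smem (i:ℤ) T then
          (-1:K)^(d - i) * ((-p)^T.card * (1+p)^(n - T.card)) * t^i else 0) := by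
    intro i hi
    rw [W_eval M p hp0 (Finset.mem_range.mp hi), Finset.sum_mul]
    refine Finset.sum_congr rfl fun T _ => ?_
    rw [ite_mul, zero_mul]
  rw [Finset.sum_congr rfl hstep, Finset.sum_comm]
  have hper : ∀ T : Finset α,
      (∑ i ∈ Finset.range d, (if M.Smem (i:ℤ) T then
          (-1:K)^(d - i) * ((-p)^T.card * (1+p)^(n - T.card)) * t^i else 0)) * (1 + t)
      = (-1)^(M.rk T) * (-p)^T.card * (1+p)^(n - T.card) * t^(d - M.rk T)
        - ((-p)^T.card * (1+p)^(n - T.card)) * t^d := by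
    intro T
    have hrkd : M.rk T ≤ d := M.rk_le_rank T
    have hcond : ∀ i : ℕ, (M.Smem (i:ℤ) T) ↔ (d - M.rk T ≤ i) := by
      intro i
      unfold FinMatroid.Smem
      omega
    have h1 : ∀ i ∈ Finset.range d, (if M.Smem (i:ℤ) T then
          (-1:K)^(d - i) * ((-p)^T.card * (1+p)^(n - T.card)) * t^i else 0)
        = (if d - M.rk T ≤ i then
          ((-p)^T.card * (1+p)^(n - T.card)) * ((-1:K)^(d - i) * t^i) else 0) := by
      intro i _
      rw [if_congr (hcond i) rfl rfl]
      split
      · ring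
      · rfl
    rw [Finset.sum_congr rfl h1, ← Finset.sum_filter,
      show (Finset.range d).filter (fun i => d - M.rk T ≤ i) = Finset.Ico (d - M.rk T) d by
        ext i; simp [Finset.mem_Ico]; omega,
      ← Finset.mul_sum, mul_assoc, geom_piece t (by omega : d - M.rk T ≤ d)]
    rw [show d - (d - M.rk T) = M.rk T by omega]
    ring
  rw [Finset.sum_mul, Finset.sum_congr rfl (fun T _ => hper T), Finset.sum_sub_distrib,
    ← Finset.sum_mul]
  have hone : ∑ T : Finset α, ((-p:K))^T.card * (1+p)^(n - T.card) = 1 := by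
    have h2 := sum_powerset_pow (α := α) (-p : K) (1+p) Finset.univ
    rw [Finset.powerset_univ, Finset.card_univ,
      show (-p) + (1+p) = (1:K) by ring, one_pow] at h2
    exact h2
  rw [hone, one_mul]
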